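/- arXiv:2103.04668 — 3 statements merged into one kernel-verified Lean document; each statement's English description precedes it below -/
import Mathlib

section
/- Let D be a distance graph on a finite set X and let g be a td-norm. Define the g-length of a path as the g-aggregation of its edge weights, and the distance closure d^{T,g}_{ij} as the infimum over all paths from i to j of their g-length. If an edge d_{ij} satisfies d_{ij} > d^{T,g}_{ij} (it is semi-triangular), then no shortest g-path between any pair of nodes uses the edge (i,j); consequently the distance closure of the backbone subgraph B^g (containing only edges with d_{ij} = d^{T,g}_{ij}) equals the distance closure of D. -/
/-!
An edge that is not in the backbone is beaten by a strictly shorter path, and every edge of that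
path is at most the path's length (the identity `0` and monotonicity make `a ≤ g a b`), hence
strictly lighter than the removed edge. By well-founded induction on edge weights, which take
finitely many values, every edge `(a, b)` can therefore be replaced by a backbone path of length
at most `d a b`; splicing these into any path of `D` shows that the backbone loses nothing.
-/

open scoped ENNReal

variable {X : Type*}

/-- The `g`-length of the path `i, k₁, ..., kₘ, j` in the distance graph `d`. -/
def pathLen (g : ℝ≥0∞ → ℝ≥0∞ → ℝ≥0∞) (d : X → X → ℝ≥0∞) : X → List X → X → ℝ≥0∞
  | i, [], j => d i j
  | i, k :: ks, j => g (d i k) (pathLen g d k ks j)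

/-- The shortest-path distance closure `d^{T,g}`: infimum of `g`-lengths over all paths. -/
noncomputable def dClosure (g : ℝ≥0∞ → ℝ≥0∞ → ℝ≥0∞) (d : X → X → ℝ≥0∞) (i j : X) : ℝ≥0∞ :=
  ⨅ p : List X, pathLen g d i p j

/-- The distance backbone `B^g`: keeps an edge iff its weight equals the closure value,
otherwise sets it to `∞` (no edge). -/
noncomputable def backbone (g : ℝ≥0∞ → ℝ≥0∞ → ℝ≥0∞) (d : X → X → ℝ≥0∞) :
    X → X → ℝ≥0∞ :=
  fun i j => if d i j = dClosure g d i j then d i j else ⊤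

section TdNorm

variable {g : ℝ≥0∞ → ℝ≥0∞ → ℝ≥0∞}

theorem left_le_apply (hmono : ∀ a b c e, a ≤ c → b ≤ e → g a b ≤ g c e)
    (hid : ∀ a, g a 0 = a) (a b : ℝ≥0∞) : a ≤ g a b :=
  (hid a).symm.trans_le (hmono a 0 a b le_rfl bot_le)

theorem right_le_apply (hcomm : ∀ a b, g a b = g b a)
    (hmono : ∀ a b c e, a ≤ c → b ≤ e → g a b ≤ g c e)
    (hid : ∀ a, g a 0 = a) (a b : ℝ≥0∞) : b ≤ g a b :=
  (left_le_apply hmono hid b a).trans_eq (hcomm b a)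

theorem pathLen_mono (hmono : ∀ a b c e, a ≤ c → b ≤ e → g a b ≤ g c e)
    {d e : X → X → ℝ≥0∞} (h : ∀ a b, d a b ≤ e a b) (p : List X) (i j : X) :
    pathLen g d i p j ≤ pathLen g e i p j := by
  induction p generalizing i with
  | nil => exact h i j
  | cons k ks ih => exact hmono _ _ _ _ (h i k) (ih k)

theorem dClosure_mono (hmono : ∀ a b c e, a ≤ c → b ≤ e → g a b ≤ g c e)
    {d e : X → X → ℝ≥0∞} (h : ∀ a b, d a b ≤ e a b) (i j : X) :
    dClosure g d i j ≤ dClosure g e i j :=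
  iInf_mono fun p => pathLen_mono hmono h p i j

theorem pathLen_append (hassoc : ∀ a b c, g a (g b c) = g (g a b) c)
    (d : X → X → ℝ≥0∞) (p q : List X) (i k j : X) :
    pathLen g d i (p ++ k :: q) j = g (pathLen g d i p k) (pathLen g d k q j) := by
  induction p generalizing i with
  | nil => rfl
  | cons a p ih => exact (congrArg (g (d i a)) (ih a)).trans (hassoc _ _ _)

/-- The condition `d a b ≤ pathLen g d i p j` holds for every edge `(a, b)` of the path, so it
stands in for "`(a, b)` lies on `p`". -/
theorem exists_pathLen_le_of_edges (hcomm : ∀ a b, g a b = g b a)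
    (hassoc : ∀ a b c, g a (g b c) = g (g a b) c)
    (hmono : ∀ a b c e, a ≤ c → b ≤ e → g a b ≤ g c e) (hid : ∀ a, g a 0 = a)
    {d e : X → X → ℝ≥0∞} (p : List X) (i j : X)
    (h : ∀ a b, d a b ≤ pathLen g d i p j → ∃ q, pathLen g e a q b ≤ d a b) :
    ∃ q, pathLen g e i q j ≤ pathLen g d i p j := by
  induction p generalizing i with
  | nil => exact h i j le_rfl
  | cons k ks ih =>
    obtain ⟨q₁, hq₁⟩ := h i k (left_le_apply hmono hid _ _)
    obtain ⟨q₂, hq₂⟩ := ih k fun a b hab => h a b (hab.trans (right_le_apply hcomm hmono hid _ _))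
    refine ⟨q₁ ++ k :: q₂, ?_⟩
    rw [pathLen_append hassoc]
    exact hmono _ _ _ _ hq₁ hq₂

theorem le_backbone (g : ℝ≥0∞ → ℝ≥0∞ → ℝ≥0∞) (d : X → X → ℝ≥0∞) (a b : X) :
    d a b ≤ backbone g d a b := by
  unfold backbone
  split_ifs <;> simp

theorem exists_backbone_pathLen_le [Finite X] (hcomm : ∀ a b, g a b = g b a)
    (hassoc : ∀ a b c, g a (g b c) = g (g a b) c)
    (hmono : ∀ a b c e, a ≤ c → b ≤ e → g a b ≤ g c e) (hid : ∀ a, g a 0 = a)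
    (d : X → X → ℝ≥0∞) (a b : X) :
    ∃ q, pathLen g (backbone g d) a q b ≤ d a b := by
  have hwf : WellFounded (InvImage (· < ·) fun e : X × X => d e.1 e.2) :=
    Finite.wellFounded_of_trans_of_irrefl _
  refine hwf.induction (C := fun e => ∃ q, pathLen g (backbone g d) e.1 q e.2 ≤ d e.1 e.2)
    (a, b) ?_
  rintro ⟨a, b⟩ ih
  by_cases hkept : d a b = dClosure g d a b
  · exact ⟨[], by simp [pathLen, backbone, hkept]⟩
  · obtain ⟨p, hp⟩ : ∃ p, pathLen g d a p b < d a b :=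
      iInf_lt_iff.mp (lt_of_le_of_ne (iInf_le _ []) (Ne.symm hkept))
    obtain ⟨q, hq⟩ := exists_pathLen_le_of_edges hcomm hassoc hmono hid p a b
      fun x y hxy => ih (x, y) (hxy.trans_lt hp)
    exact ⟨q, hq.trans hp.le⟩

end TdNorm

theorem backbone_sufficiency_general [Fintype X]
    (d : X → X → ℝ≥0∞)
    (g : ℝ≥0∞ → ℝ≥0∞ → ℝ≥0∞)
    (hcomm : ∀ a b, g a b = g b a)
    (hassoc : ∀ a b c, g a (g b c) = g (g a b) c)
    (hmono : ∀ a b c e, a ≤ c → b ≤ e → g a b ≤ g c e)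
    (hid : ∀ a, g a 0 = a) :
    ∀ i j, dClosure g (backbone g d) i j = dClosure g d i j := by
  intro i j
  refine le_antisymm (le_iInf fun p => ?_) (dClosure_mono hmono (le_backbone g d) i j)
  obtain ⟨q, hq⟩ := exists_pathLen_le_of_edges hcomm hassoc hmono hid p i j
    fun a b _ => exists_backbone_pathLen_le hcomm hassoc hmono hid d a b
  exact (iInf_le _ q).trans hq

/-- **Backbone Sufficiency.** For any td-norm `g`, semi-triangular edges
(`d i j > d^{T,g} i j`) are unnecessary: the distance closure of the backbone subgraph
equals the distance closure of the original graph. -/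
theorem backbone_sufficiency [Fintype X]
    (d : X → X → ℝ≥0∞) (hsymm : ∀ i j, d i j = d j i) (hrefl : ∀ i, d i i = 0)
    (g : ℝ≥0∞ → ℝ≥0∞ → ℝ≥0∞)
    (hcomm : ∀ a b, g a b = g b a)
    (hassoc : ∀ a b c, g a (g b c) = g (g a b) c)
    (hmono : ∀ a b c e, a ≤ c → b ≤ e → g a b ≤ g c e)
    (hid : ∀ a, g a 0 = a) :
    ∀ i j, dClosure g (backbone g d) i j = dClosure g d i j :=
  backbone_sufficiency_general d g hcomm hassoc hmono hid
end

section
/- If a distance graph D on a finite set X is connected (every pair of nodes is joined by a path of finite-weight edges), then for any td-norm g its distance backbone B^g is also connected. -/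
open scoped ENNReal

variable {X : Type*}

/-!
Every finite edge `(u, v)` is joined by backbone edges, by well-founded induction on `d u v`
(there are only finitely many weights). If `(u, v)` is not itself in the backbone, some path
is strictly shorter than `d u v`; since a td-norm dominates the maximum of its arguments,
every edge of that path is strictly lighter than `d u v`, so the induction hypothesis
applies to each of them.
-/

open Relation

def IsBackboneEdge (g : ℝ≥0∞ → ℝ≥0∞ → ℝ≥0∞) (d : X → X → ℝ≥0∞) (u v : X) : Prop :=
  d u v ≠ ⊤ ∧ d u v = dClosure g d u v

theorem dClosure_le (g : ℝ≥0∞ → ℝ≥0∞ → ℝ≥0∞) (d : X → X → ℝ≥0∞) (i j : X) :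
    dClosure g d i j ≤ d i j :=
  iInf_le _ []

theorem max_le_of_monotone_of_zero_id {g : ℝ≥0∞ → ℝ≥0∞ → ℝ≥0∞}
    (hcomm : ∀ a b, g a b = g b a) (hmono : ∀ a b e, b ≤ e → g a b ≤ g a e)
    (hid : ∀ a, g a 0 = a) (a b : ℝ≥0∞) : max a b ≤ g a b := by
  have hleft : ∀ a b, a ≤ g a b := fun a b =>
    calc a = g a 0 := (hid a).symm
      _ ≤ g a b := hmono a 0 b bot_le
  exact max_le (hleft a b) (hcomm a b ▸ hleft b a)

theorem reflTransGen_of_pathLen_lt {g : ℝ≥0∞ → ℝ≥0∞ → ℝ≥0∞} {d : X → X → ℝ≥0∞}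
    {R : X → X → Prop} {c : ℝ≥0∞} (hmax : ∀ a b, max a b ≤ g a b)
    (hR : ∀ u v, d u v < c → ReflTransGen R u v) :
    ∀ (p : List X) (i j : X), pathLen g d i p j < c → ReflTransGen R i j
  | [], i, j, h => hR i j h
  | k :: ks, i, j, h => by
    have hlt : max (d i k) (pathLen g d k ks j) < c := (hmax _ _).trans_lt h
    exact (hR i k (lt_of_le_of_lt (le_max_left _ _) hlt)).trans
      (reflTransGen_of_pathLen_lt hmax hR ks k j (lt_of_le_of_lt (le_max_right _ _) hlt))

theorem reflTransGen_isBackboneEdge_of_ne_top [Finite X] {g : ℝ≥0∞ → ℝ≥0∞ → ℝ≥0∞}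
    {d : X → X → ℝ≥0∞} (hmax : ∀ a b, max a b ≤ g a b) (u v : X) (huv : d u v ≠ ⊤) :
    ReflTransGen (IsBackboneEdge g d) u v := by
  let weight : X × X → ℝ≥0∞ := fun e => d e.1 e.2
  have hwf : WellFounded (InvImage (· < ·) weight) :=
    Finite.wellFounded_of_trans_of_irrefl _
  refine hwf.induction (C := fun e => d e.1 e.2 ≠ ⊤ → ReflTransGen (IsBackboneEdge g d) e.1 e.2)
    (u, v) (fun ⟨u, v⟩ ih huv => ?_) huv
  by_cases hback : d u v = dClosure g d u v
  · exact .single ⟨huv, hback⟩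
  have hlt : dClosure g d u v < d u v := (dClosure_le g d u v).lt_of_ne' hback
  obtain ⟨p, hp⟩ := iInf_lt_iff.1 hlt
  exact reflTransGen_of_pathLen_lt hmax
    (fun a b hab => ih (a, b) hab (hab.trans_le le_top).ne) p u v hp

theorem backbone_connectivity_general [Fintype X]
    (d : X → X → ℝ≥0∞)
    (g : ℝ≥0∞ → ℝ≥0∞ → ℝ≥0∞)
    (hcomm : ∀ a b, g a b = g b a)
    (hmono : ∀ a b c e, a ≤ c → b ≤ e → g a b ≤ g c e)
    (hid : ∀ a, g a 0 = a)
    (hconn : ∀ a b : X, Relation.ReflTransGen (fun u v => d u v ≠ ⊤) a b) :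
    ∀ a b : X,
      Relation.ReflTransGen (fun u v => d u v ≠ ⊤ ∧ d u v = dClosure g d u v) a b := by
  have hmax : ∀ a b, max a b ≤ g a b :=
    max_le_of_monotone_of_zero_id hcomm (fun a b e => hmono a b a e le_rfl) hid
  intro a b
  exact reflTransGen_closed (fun u v => reflTransGen_isBackboneEdge_of_ne_top hmax u v) a b
    (hconn a b)

/-- **Backbone Connectivity.** If the distance graph is connected (every pair of nodes is
joined by a chain of finite-weight edges), then for any td-norm `g` (with `g` finite on
finite inputs) the distance backbone is also connected: every pair of nodes is joined by a
chain of backbone edges (finite edges whose weight equals the closure value). -/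
theorem backbone_connectivity [Fintype X]
    (d : X → X → ℝ≥0∞) (hsymm : ∀ i j, d i j = d j i) (hrefl : ∀ i, d i i = 0)
    (g : ℝ≥0∞ → ℝ≥0∞ → ℝ≥0∞)
    (hcomm : ∀ a b, g a b = g b a)
    (hassoc : ∀ a b c, g a (g b c) = g (g a b) c)
    (hmono : ∀ a b c e, a ≤ c → b ≤ e → g a b ≤ g c e)
    (hid : ∀ a, g a 0 = a)
    (hfin : ∀ a b, a ≠ ⊤ → b ≠ ⊤ → g a b ≠ ⊤)
    (hconn : ∀ a b : X, Relation.ReflTransGen (fun u v => d u v ≠ ⊤) a b) :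
    ∀ a b : X,
      Relation.ReflTransGen (fun u v => d u v ≠ ⊤ ∧ d u v = dClosure g d u v) a b :=
  backbone_connectivity_general d g hcomm hmono hid hconn
end

section
/- For a distance graph D on a finite set X, the ultra-metric backbone is a subgraph of the metric backbone: every edge satisfying d_{ij} = d^{T,u}_{ij} (where path length is the maximum edge weight along the path) also satisfies d_{ij} = d^{T,m}_{ij} (where path length is the sum of edge weights along the path). -/
open scoped ENNReal

variable {X : Type*}

section

variable {g h : ℝ≥0∞ → ℝ≥0∞ → ℝ≥0∞} (d : X → X → ℝ≥0∞)

theorem pathLen_le_pathLen (hgh : ∀ a b, g a b ≤ h a b) (hg : ∀ a, Monotone (g a))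
    (i : X) (p : List X) (j : X) : pathLen g d i p j ≤ pathLen h d i p j := by
  induction p generalizing i with
  | nil => exact le_rfl
  | cons k ks ih => exact (hg _ (ih k)).trans (hgh _ _)

theorem dClosure_le_dClosure (hgh : ∀ a b, g a b ≤ h a b) (hg : ∀ a, Monotone (g a))
    (i j : X) : dClosure g d i j ≤ dClosure h d i j :=
  iInf_mono fun p => pathLen_le_pathLen d hgh hg i p j

theorem dClosure_le_self (i j : X) : dClosure g d i j ≤ d i j :=
  iInf_le (fun p => pathLen g d i p j) []

end

theorem ultrametric_backbone_subgraph_metric_backbone_general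
    (d : X → X → ℝ≥0∞)
    (i j : X)
    (hu : d i j = dClosure (fun a b => max a b) d i j) :
    d i j = dClosure (fun a b => a + b) d i j := by
  refine le_antisymm ?_ (dClosure_le_self d i j)
  calc d i j = dClosure (fun a b => max a b) d i j := hu
    _ ≤ dClosure (fun a b => a + b) d i j :=
      dClosure_le_dClosure d (fun _ _ => max_le le_self_add le_add_self)
        (fun a _ _ => max_le_max_left a) i j

/-- **Ultra-metric backbone is a subgraph of the metric backbone.** Every edge whose weight
equals its minimax (ultra-metric, `g = max`) closure value also equals its additive
(metric, `g = +`) closure value. -/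
theorem ultrametric_backbone_subgraph_metric_backbone [Fintype X]
    (d : X → X → ℝ≥0∞) (hsymm : ∀ i j, d i j = d j i) (hrefl : ∀ i, d i i = 0)
    (i j : X)
    (hu : d i j = dClosure (fun a b => max a b) d i j) :
    d i j = dClosure (fun a b => a + b) d i j :=
  ultrametric_backbone_subgraph_metric_backbone_general d i j hu
end
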